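/- arXiv:2012.10632 — 9 statements merged into one kernel-verified Lean document; each statement's English description precedes it below -/
import Mathlib

section
/- Let μ, σ, q > 0, c ≥ 0, θ₁(c) > 0 > θ₂(c) the roots of (σ²/2)z² + (μ−c)z − q = 0, and for a ∈ ℝ set U_a(x) = (c/q)(1 − e^{θ₂(c)x}) + a(e^{θ₁(c)x} − e^{θ₂(c)x}). If a > 0, then U_a is strictly increasing on ℝ, and there exists y₀ = (log((c/q + a)θ₂(c)²) − log(a θ₁(c)²))/(θ₁(c) − θ₂(c)) such that U_a is concave on (−∞, y₀) and convex on (y₀, ∞). -/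
theorem stmt_6 (μ σ q c θ₁ θ₂ a : ℝ) (hμ : 0 < μ) (hσ : 0 < σ) (hq : 0 < q) (hc : 0 ≤ c)
    (hθ₁pos : 0 < θ₁) (hθ₂neg : θ₂ < 0)
    (hθ₁root : (σ^2/2) * θ₁^2 + (μ - c) * θ₁ - q = 0)
    (hθ₂root : (σ^2/2) * θ₂^2 + (μ - c) * θ₂ - q = 0)
    (ha : 0 < a)
    (Ua : ℝ → ℝ)
    (hUa : ∀ x, Ua x = (c/q) * (1 - Real.exp (θ₂ * x))
      + a * (Real.exp (θ₁ * x) - Real.exp (θ₂ * x))) :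
    StrictMono Ua ∧
    ∃ y₀ : ℝ, y₀ = (Real.log ((c/q + a) * θ₂^2) - Real.log (a * θ₁^2)) / (θ₁ - θ₂) ∧
      ConcaveOn ℝ (Set.Iio y₀) Ua ∧ ConvexOn ℝ (Set.Ioi y₀) Ua := by
  have hB : 0 < c/q + a := by positivity
  have hθd : 0 < θ₁ - θ₂ := by linarith
  set B : ℝ := c/q + a with hBdef
  have hderiv : ∀ x, HasDerivAt Ua (a*θ₁*Real.exp (θ₁*x) - B*θ₂*Real.exp (θ₂*x)) x := by
    intro x
    have e1 : HasDerivAt (fun y => Real.exp (θ₁*y)) (Real.exp (θ₁*x) * (θ₁*1)) x :=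
      ((hasDerivAt_id x).const_mul θ₁).exp
    have e2 : HasDerivAt (fun y => Real.exp (θ₂*y)) (Real.exp (θ₂*x) * (θ₂*1)) x :=
      ((hasDerivAt_id x).const_mul θ₂).exp
    have h := (((hasDerivAt_const x (1:ℝ)).sub e2).const_mul (c/q)).add
      ((e1.sub e2).const_mul a)
    have heq : Ua = fun y => (c/q) * (1 - Real.exp (θ₂*y)) + a*(Real.exp (θ₁*y) - Real.exp (θ₂*y)) :=
      funext hUa
    rw [heq]
    refine h.congr_deriv ?_
    simp [hBdef]; ring
  have hderiv' : ∀ x, HasDerivAt (fun y => a*θ₁*Real.exp (θ₁*y) - B*θ₂*Real.exp (θ₂*y))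
      (a*θ₁^2*Real.exp (θ₁*x) - B*θ₂^2*Real.exp (θ₂*x)) x := by
    intro x
    have e1 : HasDerivAt (fun y => Real.exp (θ₁*y)) (Real.exp (θ₁*x) * (θ₁*1)) x :=
      ((hasDerivAt_id x).const_mul θ₁).exp
    have e2 : HasDerivAt (fun y => Real.exp (θ₂*y)) (Real.exp (θ₂*x) * (θ₂*1)) x :=
      ((hasDerivAt_id x).const_mul θ₂).exp
    have h := (e1.const_mul (a*θ₁)).sub (e2.const_mul (B*θ₂))
    refine h.congr_deriv ?_
    ring
  have hd1 : deriv Ua = fun x => a*θ₁*Real.exp (θ₁*x) - B*θ₂*Real.exp (θ₂*x) :=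
    funext fun x => (hderiv x).deriv
  have hd2 : ∀ x, deriv^[2] Ua x = a*θ₁^2*Real.exp (θ₁*x) - B*θ₂^2*Real.exp (θ₂*x) := by
    intro x
    have h0 : deriv^[2] Ua x = deriv (deriv Ua) x := rfl
    rw [h0, hd1, (hderiv' x).deriv]
  have hdiff : Differentiable ℝ Ua := fun x => (hderiv x).differentiableAt
  have hdiff' : Differentiable ℝ (deriv Ua) := by
    rw [hd1]; exact fun x => (hderiv' x).differentiableAt
  have hcont : Continuous Ua := hdiff.continuous
  constructor
  · apply strictMono_of_deriv_pos
    intro x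
    rw [hd1]
    show 0 < a*θ₁*Real.exp (θ₁*x) - B*θ₂*Real.exp (θ₂*x)
    have h1 : 0 < a*θ₁*Real.exp (θ₁*x) := by positivity
    have h2 : 0 < B*(-θ₂)*Real.exp (θ₂*x) := by
      have : 0 < -θ₂ := by linarith
      positivity
    nlinarith
  · set y₀ : ℝ := (Real.log (B * θ₂^2) - Real.log (a * θ₁^2)) / (θ₁ - θ₂) with hy₀
    have hθ₂sq : 0 < θ₂^2 := by nlinarith
    have hBθ : 0 < B * θ₂^2 := mul_pos hB hθ₂sq
    have haθ : 0 < a * θ₁^2 := by positivity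
    have hkey : Real.exp ((θ₁ - θ₂) * y₀) = (B * θ₂^2) / (a * θ₁^2) := by
      have h1 : (θ₁ - θ₂) * y₀ = Real.log (B * θ₂^2) - Real.log (a * θ₁^2) := by
        rw [hy₀]; field_simp
      rw [h1, Real.exp_sub, Real.exp_log hBθ, Real.exp_log haθ]
    have hsplit : ∀ x : ℝ, Real.exp (θ₁*x) = Real.exp ((θ₁-θ₂)*x) * Real.exp (θ₂*x) := by
      intro x
      rw [← Real.exp_add]; ring_nf
    refine ⟨y₀, rfl, ?_, ?_⟩
    · apply concaveOn_of_deriv2_nonpos (convex_Iio y₀) hcont.continuousOn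
        (hdiff.differentiableOn) (hdiff'.differentiableOn)
      intro x hx
      rw [interior_Iio] at hx
      rw [hd2]
      have hlt : Real.exp ((θ₁-θ₂)*x) < (B * θ₂^2) / (a * θ₁^2) := by
        rw [← hkey]
        exact Real.exp_lt_exp.2 (by nlinarith [hx.out])
      rw [lt_div_iff₀ haθ] at hlt
      rw [hsplit x]
      nlinarith [mul_lt_mul_of_pos_right hlt (Real.exp_pos (θ₂*x))]
    · apply convexOn_of_deriv2_nonneg (convex_Ioi y₀) hcont.continuousOn
        (hdiff.differentiableOn) (hdiff'.differentiableOn)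
      intro x hx
      rw [interior_Ioi] at hx
      rw [hd2]
      have hlt : (B * θ₂^2) / (a * θ₁^2) < Real.exp ((θ₁-θ₂)*x) := by
        rw [← hkey]
        exact Real.exp_lt_exp.2 (by nlinarith [hx.out])
      rw [div_lt_iff₀ haθ] at hlt
      rw [hsplit x]
      nlinarith [mul_lt_mul_of_pos_right hlt (Real.exp_pos (θ₂*x))]
end

section
/- Let μ, σ, q > 0 and c ≥ 0, with θ₁(c) > 0 > θ₂(c) the roots of (σ²/2)z² + (μ−c)z − q = 0 and b₁(x,c) = ((−θ₁′(c)e^{θ₁(c)x} + θ₂′(c)e^{θ₂(c)x})·x)/(e^{θ₁(c)x} − e^{θ₂(c)x}). Then ∂_x b₁(x,c) < 0 for all x > 0, and lim_{x→0⁺} ∂_x b₁(x,c) = −(θ₁′(c) + θ₂′(c))/2 < 0. -/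
lemma aux_sinh {u : ℝ} (hu : 0 < u) : 2*u < Real.exp u - Real.exp (-u) := by
  have := Real.self_lt_sinh_iff.mpr hu
  rw [Real.sinh_eq] at this
  linarith

lemma aux_cube {u : ℝ} (hu : 0 < u) (hu1 : u ≤ 1) :
    Real.exp u - Real.exp (-u) - 2*u ≤ 4/9*u^3 := by
  have h1 := Real.exp_bound (x := u) (by rw [abs_of_pos hu]; exact hu1) (n := 3) (by norm_num)
  have h2 := Real.exp_bound (x := -u) (by rw [abs_neg, abs_of_pos hu]; exact hu1) (n := 3)
    (by norm_num)
  simp [Finset.sum_range_succ, abs_of_pos hu, abs_neg] at h1 h2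
  rw [abs_le] at h1 h2
  norm_num [Nat.factorial] at h1 h2
  linarith [h1.1, h1.2, h2.1, h2.2]

noncomputable def Kf (p r x : ℝ) : ℝ :=
  (Real.exp (p*x)^2 - Real.exp (r*x)^2 - 2*((p-r)*x)*(Real.exp (p*x)*Real.exp (r*x)))
    / (Real.exp (p*x) - Real.exp (r*x))^2

lemma Kf_eq (p r x : ℝ) :
    Kf p r x = (Real.exp ((p-r)*x)^2 - 1 - 2*((p-r)*x)*Real.exp ((p-r)*x))
      / (Real.exp ((p-r)*x) - 1)^2 := by
  have he1 : Real.exp (p*x) = Real.exp (r*x) * Real.exp ((p-r)*x) := by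
    rw [← Real.exp_add]; congr 1; ring
  rw [Kf, he1]
  have h1 : (Real.exp (r*x)*Real.exp ((p-r)*x))^2 - Real.exp (r*x)^2
      - 2*((p-r)*x)*((Real.exp (r*x)*Real.exp ((p-r)*x))*Real.exp (r*x))
      = Real.exp (r*x)^2 * (Real.exp ((p-r)*x)^2 - 1 - 2*((p-r)*x)*Real.exp ((p-r)*x)) := by
    ring
  have h2 : (Real.exp (r*x)*Real.exp ((p-r)*x) - Real.exp (r*x))^2
      = Real.exp (r*x)^2 * (Real.exp ((p-r)*x) - 1)^2 := by ring
  rw [h1, h2, mul_div_mul_left _ _ (by positivity)]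

lemma keyB {u : ℝ} (hu : 0 < u) : 0 < Real.exp u^2 - 1 - 2*u*Real.exp u := by
  have hsinh := aux_sinh hu
  have hwev : Real.exp u * Real.exp (-u) = 1 := by rw [← Real.exp_add]; simp
  nlinarith [mul_lt_mul_of_pos_right hsinh (Real.exp_pos u), hwev]

lemma keyC {u : ℝ} (hu : 0 < u) :
    Real.exp u^2 - 1 - 2*u*Real.exp u < (Real.exp u - 1)^2 := by
  have hadd := Real.add_one_lt_exp (x := -u) (by linarith)
  have hwev : Real.exp u * Real.exp (-u) = 1 := by rw [← Real.exp_add]; simp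
  nlinarith [mul_lt_mul_of_pos_left hadd (Real.exp_pos u), hwev]

lemma keyD {u : ℝ} (hu : 0 < u) (hu1 : u ≤ 1) :
    Real.exp u^2 - 1 - 2*u*Real.exp u ≤ 4/9*u*(Real.exp u - 1)^2 := by
  have hcube := aux_cube hu hu1
  have hwev : Real.exp u * Real.exp (-u) = 1 := by rw [← Real.exp_add]; simp
  have hw := Real.exp_pos u
  have hs : u < Real.exp (u/2) - Real.exp (-(u/2)) := by
    have := aux_sinh (u := u/2) (by linarith)
    linarith
  have hh1 : Real.exp (u/2) * Real.exp (u/2) = Real.exp u := by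
    rw [← Real.exp_add]; congr 1; ring
  have hh2 : Real.exp (-(u/2)) * Real.exp (-(u/2)) = Real.exp (-u) := by
    rw [← Real.exp_add]; congr 1; ring
  have hh3 : Real.exp (u/2) * Real.exp (-(u/2)) = 1 := by
    rw [← Real.exp_add]; simp
  have hs2 : u^2 < Real.exp u + Real.exp (-u) - 2 := by
    nlinarith [mul_self_lt_mul_self hu.le hs, hh1, hh2, hh3]
  have hden : u^2*Real.exp u < (Real.exp u - 1)^2 := by
    nlinarith [mul_lt_mul_of_pos_right hs2 hw, hwev]
  have s1 : Real.exp u^2 - 1 - 2*u*Real.exp u ≤ 4/9*u^3*Real.exp u := by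
    nlinarith [mul_le_mul_of_nonneg_right hcube hw.le, hwev]
  have s2 : 4/9*u^3*Real.exp u ≤ 4/9*u*(Real.exp u - 1)^2 := by
    nlinarith [mul_le_mul_of_nonneg_left hden.le (by positivity : (0:ℝ) ≤ 4/9*u)]
  linarith

lemma keyW {u : ℝ} (hu : 0 < u) : 1 < Real.exp u := by rw [← Real.exp_zero]; exact Real.exp_lt_exp.mpr hu

set_option maxHeartbeats 1000000 in
theorem stmt_10 (μ σ q c θ₁ θ₂ θ₁' θ₂' : ℝ)
    (hμ : 0 < μ) (hσ : 0 < σ) (hq : 0 < q) (hc : 0 ≤ c)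
    (hθ₁ : θ₁ = (c - μ + Real.sqrt ((c - μ)^2 + 2*q*σ^2)) / σ^2)
    (hθ₂ : θ₂ = (c - μ - Real.sqrt ((c - μ)^2 + 2*q*σ^2)) / σ^2)
    (hθ₁' : θ₁' = (1 + (c - μ)/Real.sqrt ((c - μ)^2 + 2*q*σ^2))/σ^2)
    (hθ₂' : θ₂' = (1 - (c - μ)/Real.sqrt ((c - μ)^2 + 2*q*σ^2))/σ^2)
    (b₁ : ℝ → ℝ)
    (hb₁ : ∀ x, b₁ x = ((-θ₁' * Real.exp (θ₁ * x) + θ₂' * Real.exp (θ₂ * x)) * x)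
      / (Real.exp (θ₁ * x) - Real.exp (θ₂ * x))) :
    (∀ x : ℝ, 0 < x → deriv b₁ x < 0) ∧
    Filter.Tendsto (deriv b₁) (nhdsWithin 0 (Set.Ioi 0)) (nhds (-(θ₁' + θ₂')/2)) ∧
    -(θ₁' + θ₂')/2 < 0 := by
  have hσ2 : (0:ℝ) < σ^2 := by positivity
  set S := Real.sqrt ((c - μ)^2 + 2*q*σ^2) with hSdef
  have hSpos : 0 < S := Real.sqrt_pos.mpr (by positivity)
  have habs : |c - μ| < S := by
    rw [← Real.sqrt_sq_eq_abs]
    exact Real.sqrt_lt_sqrt (sq_nonneg _) (by nlinarith)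
  have habs' := abs_lt.mp habs
  have hθ1'pos : 0 < θ₁' := by
    rw [hθ₁']
    apply div_pos _ hσ2
    have : -1 < (c - μ)/S := (lt_div_iff₀ hSpos).mpr (by linarith)
    linarith
  have hθ2'pos : 0 < θ₂' := by
    rw [hθ₂']
    apply div_pos _ hσ2
    have : (c - μ)/S < 1 := (div_lt_one hSpos).mpr habs'.2
    linarith
  set a := (θ₁' + θ₂')/2 with hadef
  set d := (θ₁' - θ₂')/2 with hddef
  have hapos : 0 < a := by rw [hadef]; linarith
  have hadsum : a + d = θ₁' := by rw [hadef, hddef]; ring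
  have hadsub : a - d = θ₂' := by rw [hadef, hddef]; ring
  have hδpos : 0 < θ₁ - θ₂ := by
    have : θ₁ - θ₂ = 2*S/σ^2 := by rw [hθ₁, hθ₂]; ring
    rw [this]; positivity
  -- A : deriv b₁ = -a - d * Kf θ₁ θ₂ on Ioi 0
  have hA : ∀ x : ℝ, 0 < x → deriv b₁ x = -a - d * Kf θ₁ θ₂ x := by
    intro x hx
    have hlt : Real.exp (θ₂*x) < Real.exp (θ₁*x) := Real.exp_lt_exp.mpr (by nlinarith)
    have hDpos : 0 < Real.exp (θ₁*x) - Real.exp (θ₂*x) := by linarith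
    have hDne : Real.exp (θ₁*x) - Real.exp (θ₂*x) ≠ 0 := ne_of_gt hDpos
    set g : ℝ → ℝ := fun y => -a*y - d*((y*(Real.exp (θ₁*y)+Real.exp (θ₂*y)))
        /(Real.exp (θ₁*y)-Real.exp (θ₂*y))) with hgdef
    have hev : ∀ᶠ y in nhds x, b₁ y = g y := by
      filter_upwards [isOpen_Ioi.mem_nhds hx] with y hy
      have hy' : 0 < y := Set.mem_Ioi.mp hy
      have hlt' : Real.exp (θ₂*y) < Real.exp (θ₁*y) := Real.exp_lt_exp.mpr (by nlinarith [mul_pos hδpos hy'])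
      have hDne' : Real.exp (θ₁*y) - Real.exp (θ₂*y) ≠ 0 := by linarith
      have hnum : (-θ₁' * Real.exp (θ₁*y) + θ₂' * Real.exp (θ₂*y)) * y
          = (-a*y)*(Real.exp (θ₁*y) - Real.exp (θ₂*y))
            - d*(y*(Real.exp (θ₁*y)+Real.exp (θ₂*y))) := by
        rw [← hadsum, ← hadsub]; ring
      rw [hb₁, hgdef, hnum, sub_div, mul_div_assoc (-a*y), div_self hDne', mul_one,
        mul_div_assoc]
    have h1 : HasDerivAt (fun y : ℝ => θ₁ * y) θ₁ x := by
      simpa using (hasDerivAt_id x).const_mul θ₁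
    have h2 : HasDerivAt (fun y : ℝ => θ₂ * y) θ₂ x := by
      simpa using (hasDerivAt_id x).const_mul θ₂
    have hE1 := h1.exp
    have hE2 := h2.exp
    have hN : HasDerivAt (fun y : ℝ => y*(Real.exp (θ₁*y)+Real.exp (θ₂*y)))
        (1*(Real.exp (θ₁*x)+Real.exp (θ₂*x)) +
          x*(Real.exp (θ₁*x)*θ₁ + Real.exp (θ₂*x)*θ₂)) x :=
      (hasDerivAt_id x).mul (hE1.add hE2)
    have hDder : HasDerivAt (fun y : ℝ => Real.exp (θ₁*y) - Real.exp (θ₂*y))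
        (Real.exp (θ₁*x)*θ₁ - Real.exp (θ₂*x)*θ₂) x := hE1.sub hE2
    have hQ := hN.div hDder hDne
    have hg : HasDerivAt g (-a*1 - d*(((1*(Real.exp (θ₁*x)+Real.exp (θ₂*x)) +
          x*(Real.exp (θ₁*x)*θ₁ + Real.exp (θ₂*x)*θ₂)) *
          (Real.exp (θ₁*x) - Real.exp (θ₂*x)) -
          (x*(Real.exp (θ₁*x)+Real.exp (θ₂*x))) *
          (Real.exp (θ₁*x)*θ₁ - Real.exp (θ₂*x)*θ₂)) /
          (Real.exp (θ₁*x) - Real.exp (θ₂*x))^2)) x :=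
      (((hasDerivAt_id x).const_mul (-a)).sub (hQ.const_mul d))
    rw [Filter.EventuallyEq.deriv_eq hev, hg.deriv, Kf, mul_one]
    congr 2
    ring
  refine ⟨?_, ?_, by linarith⟩
  · intro x hx
    rw [hA x hx]
    have hu : 0 < (θ₁-θ₂)*x := mul_pos hδpos hx
    have hKx := Kf_eq θ₁ θ₂ x
    have hw := keyW hu
    have hden : (0:ℝ) < (Real.exp ((θ₁-θ₂)*x) - 1)^2 := pow_pos (by linarith) 2
    have hK0 : 0 < Kf θ₁ θ₂ x := by
      rw [hKx]; exact div_pos (keyB hu) hden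
    have hK1 : Kf θ₁ θ₂ x < 1 := by
      rw [hKx, div_lt_one hden]; exact keyC hu
    rcases le_or_gt 0 d with hd | hd
    · nlinarith
    · nlinarith [hadsum, hθ1'pos]
  · have hKto : Filter.Tendsto (fun x => Kf θ₁ θ₂ x) (nhdsWithin 0 (Set.Ioi 0)) (nhds 0) := by
      apply squeeze_zero' (g := fun x => 4/9*((θ₁-θ₂)*x))
      · filter_upwards [self_mem_nhdsWithin] with x hx
        have hu : 0 < (θ₁-θ₂)*x := mul_pos hδpos hx
        have hw := keyW hu
        rw [Kf_eq]
        exact (div_pos (keyB hu) (pow_pos (by linarith) 2)).le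
      · have hmem : Set.Ioo (0:ℝ) (1/(θ₁-θ₂)) ∈ nhdsWithin (0:ℝ) (Set.Ioi 0) :=
          Ioo_mem_nhdsGT_of_mem ⟨le_refl _, by positivity⟩
        filter_upwards [hmem] with x hx
        have hu : 0 < (θ₁-θ₂)*x := mul_pos hδpos hx.1
        have hu1 : (θ₁-θ₂)*x ≤ 1 := by
          have := mul_lt_mul_of_pos_left hx.2 hδpos
          rw [mul_one_div, div_self hδpos.ne'] at this
          exact this.le
        have hw := keyW hu
        have hden : (0:ℝ) < (Real.exp ((θ₁-θ₂)*x) - 1)^2 := pow_pos (by linarith) 2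
        rw [Kf_eq, div_le_iff₀ hden]
        have := keyD hu hu1
        nlinarith
      · have hcont : Filter.Tendsto (fun x : ℝ => 4/9*((θ₁-θ₂)*x)) (nhds 0)
            (nhds (4/9*((θ₁-θ₂)*0))) := Continuous.tendsto (by continuity) 0
        simp only [mul_zero] at hcont
        exact hcont.mono_left nhdsWithin_le_nhds
    have htend : Filter.Tendsto (fun x => -a - d * Kf θ₁ θ₂ x) (nhdsWithin 0 (Set.Ioi 0))
        (nhds (-a - d * 0)) := Filter.Tendsto.sub tendsto_const_nhds
        (Filter.Tendsto.const_mul d hKto)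
    have heq : deriv b₁ =ᶠ[nhdsWithin 0 (Set.Ioi 0)] fun x => -a - d * Kf θ₁ θ₂ x := by
      filter_upwards [self_mem_nhdsWithin] with x hx
      exact hA x hx
    have hval : -a - d*0 = -(θ₁' + θ₂')/2 := by rw [hadef]; ring
    rw [← hval]
    exact htend.congr' heq.symm
end

section
/- For all s > 0 and t > 0, the function g₀(s,t) = −t² + e^s(1+t)² + e^{s+st}(−1 − 2t + st + st²) is strictly positive. -/
open Real Set

theorem stmt_11 :
    ∀ s t : ℝ, 0 < s → 0 < t →
      0 < -t^2 + Real.exp s * (1 + t)^2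
        + Real.exp (s + s*t) * (-1 - 2*t + s*t + s*t^2) := by
  intro s t hs ht
  have h1t : (0:ℝ) < 1 + t := by linarith
  -- f3
  have d3 : ∀ x : ℝ, HasDerivAt (fun x : ℝ => 1 + (1+t) * Real.exp (x*t) * (x*t*(1+t)+t-1))
      (t*(1+t)*Real.exp (x*t)*(x*t*(1+t)+2*t)) x := by
    intro x
    have hxt : HasDerivAt (fun x : ℝ => x*t) t x := by
      simpa using (hasDerivAt_id x).mul_const t
    have he : HasDerivAt (fun x : ℝ => Real.exp (x*t)) (Real.exp (x*t) * t) x := hxt.exp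
    have hp : HasDerivAt (fun x : ℝ => x*t*(1+t)+t-1) (t*(1+t)) x := by
      simpa using ((hxt.mul_const (1+t)).add_const t).sub_const 1
    have h := ((he.const_mul (1+t)).mul hp).const_add 1
    refine h.congr_deriv ?_
    ring
  have m3 : StrictMonoOn (fun x : ℝ => 1 + (1+t) * Real.exp (x*t) * (x*t*(1+t)+t-1)) (Ici 0) := by
    apply strictMonoOn_of_deriv_pos (convex_Ici 0)
    · apply Continuous.continuousOn
      fun_prop
    · intro x hx
      rw [interior_Ici] at hx
      rw [(d3 x).deriv]
      have hx' : (0:ℝ) < x := hx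
      have h1 : 0 < x*t*(1+t)+2*t := by positivity
      positivity
  have p3 : ∀ x : ℝ, 0 < x → 0 < 1 + (1+t) * Real.exp (x*t) * (x*t*(1+t)+t-1) := by
    intro x hx
    have h0 : (1:ℝ) + (1+t) * Real.exp (0*t) * (0*t*(1+t)+t-1) = t^2 := by
      simp; ring
    have := m3 (mem_Ici.mpr (le_refl 0)) (mem_Ici.mpr (le_of_lt hx)) hx
    simp only at this
    rw [h0] at this
    nlinarith [sq_nonneg t]
  -- f2
  have d2 : ∀ x : ℝ, HasDerivAt (fun x : ℝ => Real.exp x + Real.exp (x*(1+t)) * (x*t*(1+t) - 1))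
      (Real.exp x * (1 + (1+t) * Real.exp (x*t) * (x*t*(1+t)+t-1))) x := by
    intro x
    have hx1t : HasDerivAt (fun x : ℝ => x*(1+t)) (1+t) x := by
      simpa using (hasDerivAt_id x).mul_const (1+t)
    have he : HasDerivAt (fun x : ℝ => Real.exp (x*(1+t))) (Real.exp (x*(1+t)) * (1+t)) x := hx1t.exp
    have hq : HasDerivAt (fun x : ℝ => x*t*(1+t) - 1) (t*(1+t)) x := by
      simpa using ((hasDerivAt_id x).mul_const t |>.mul_const (1+t)).sub_const 1
    have h := (Real.hasDerivAt_exp x).add (he.mul hq)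
    refine h.congr_deriv ?_
    rw [show x*(1+t) = x + x*t by ring, Real.exp_add]
    ring
  have m2 : StrictMonoOn (fun x : ℝ => Real.exp x + Real.exp (x*(1+t)) * (x*t*(1+t) - 1)) (Ici 0) := by
    apply strictMonoOn_of_deriv_pos (convex_Ici 0)
    · apply Continuous.continuousOn
      fun_prop
    · intro x hx
      rw [interior_Ici] at hx
      rw [(d2 x).deriv]
      exact mul_pos (Real.exp_pos x) (p3 x hx)
  have p2 : ∀ x : ℝ, 0 < x → 0 < Real.exp x + Real.exp (x*(1+t)) * (x*t*(1+t) - 1) := by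
    intro x hx
    have h0 : Real.exp 0 + Real.exp (0*(1+t)) * (0*t*(1+t) - 1) = 0 := by simp
    have := m2 (mem_Ici.mpr (le_refl 0)) (mem_Ici.mpr (le_of_lt hx)) hx
    simp only at this
    rw [h0] at this
    exact this
  -- f1
  have d1 : ∀ x : ℝ, HasDerivAt (fun x : ℝ => Real.exp x * (1+t) + Real.exp (x*(1+t)) * (x*t*(1+t) - 1 - t))
      ((1+t) * (Real.exp x + Real.exp (x*(1+t)) * (x*t*(1+t) - 1))) x := by
    intro x
    have hx1t : HasDerivAt (fun x : ℝ => x*(1+t)) (1+t) x := by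
      simpa using (hasDerivAt_id x).mul_const (1+t)
    have he : HasDerivAt (fun x : ℝ => Real.exp (x*(1+t))) (Real.exp (x*(1+t)) * (1+t)) x := hx1t.exp
    have hq : HasDerivAt (fun x : ℝ => x*t*(1+t) - 1 - t) (t*(1+t)) x := by
      simpa using (((hasDerivAt_id x).mul_const t |>.mul_const (1+t)).sub_const 1).sub_const t
    have h := ((Real.hasDerivAt_exp x).mul_const (1+t)).add (he.mul hq)
    refine h.congr_deriv ?_
    ring
  have m1 : StrictMonoOn (fun x : ℝ => Real.exp x * (1+t) + Real.exp (x*(1+t)) * (x*t*(1+t) - 1 - t)) (Ici 0) := by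
    apply strictMonoOn_of_deriv_pos (convex_Ici 0)
    · apply Continuous.continuousOn
      fun_prop
    · intro x hx
      rw [interior_Ici] at hx
      rw [(d1 x).deriv]
      exact mul_pos h1t (p2 x hx)
  have p1 : ∀ x : ℝ, 0 < x → 0 < Real.exp x * (1+t) + Real.exp (x*(1+t)) * (x*t*(1+t) - 1 - t) := by
    intro x hx
    have h0 : Real.exp 0 * (1+t) + Real.exp (0*(1+t)) * (0*t*(1+t) - 1 - t) = 0 := by simp
    have := m1 (mem_Ici.mpr (le_refl 0)) (mem_Ici.mpr (le_of_lt hx)) hx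
    simp only at this
    rw [h0] at this
    exact this
  -- f0
  have d0 : ∀ x : ℝ, HasDerivAt (fun x : ℝ => -t^2 + Real.exp x * (1 + t)^2
        + Real.exp (x + x*t) * (-1 - 2*t + x*t + x*t^2))
      ((1+t) * (Real.exp x * (1+t) + Real.exp (x*(1+t)) * (x*t*(1+t) - 1 - t))) x := by
    intro x
    have hx1t : HasDerivAt (fun x : ℝ => x + x*t) (1+t) x := by
      exact ((hasDerivAt_id x).add ((hasDerivAt_id x).mul_const t)).congr_deriv (by ring)
    have he : HasDerivAt (fun x : ℝ => Real.exp (x + x*t)) (Real.exp (x + x*t) * (1+t)) x := hx1t.exp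
    have hq : HasDerivAt (fun x : ℝ => -1 - 2*t + x*t + x*t^2) (t + t^2) x := by
      exact (((hasDerivAt_const x (-1 - 2*t)).add ((hasDerivAt_id x).mul_const t)).add
        ((hasDerivAt_id x).mul_const (t^2))).congr_deriv (by ring)
    have h := (((Real.hasDerivAt_exp x).mul_const ((1+t)^2)).add (he.mul hq)).const_add (-t^2)
    refine (h.congr_deriv ?_).congr_of_eventuallyEq (Filter.Eventually.of_forall fun y => ?_)
    · rw [show x*(1+t) = x + x*t by ring]
      ring
    · simp only [Pi.add_apply, Pi.mul_apply]; ring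
  have m0 : StrictMonoOn (fun x : ℝ => -t^2 + Real.exp x * (1 + t)^2
      + Real.exp (x + x*t) * (-1 - 2*t + x*t + x*t^2)) (Ici 0) := by
    apply strictMonoOn_of_deriv_pos (convex_Ici 0)
    · apply Continuous.continuousOn
      fun_prop
    · intro x hx
      rw [interior_Ici] at hx
      rw [(d0 x).deriv]
      exact mul_pos h1t (p1 x hx)
  have h0 : -t^2 + Real.exp 0 * (1 + t)^2 + Real.exp (0 + 0*t) * (-1 - 2*t + 0*t + 0*t^2) = 0 := by
    simp; ring
  have := m0 (mem_Ici.mpr (le_refl 0)) (mem_Ici.mpr (le_of_lt hs)) hs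
  simp only at this
  rw [h0] at this
  exact this
end

section
/- For all s > 0 and t > 0, one has −2 + (2 − 2s + s²)e^s > 0 and the third partial derivative in t of g₀(s,t) = −t² + e^s(1+t)² + e^{s+st}(−1 − 2t + st + st²) equals s³e^{s+st}(2 + 4t + st + st²), which is strictly positive. -/
open Real

private lemma hEP (s a b c x : ℝ) :
    HasDerivAt (fun t : ℝ => Real.exp (s + s*t) * (a + b*t + c*t^2))
      (Real.exp (s + s*x) * ((s*a + b) + (s*b + 2*c)*x + s*c*x^2)) x := by
  have hA : HasDerivAt (fun t : ℝ => s + s*t) s x := by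
    simpa using ((hasDerivAt_id x).const_mul s).const_add s
  have hE := hA.exp
  have hP : HasDerivAt (fun t : ℝ => a + b*t + c*t^2) (b + 2*c*x) x := by
    have h1 : HasDerivAt (fun t : ℝ => a + b*t) b x := by
      simpa using ((hasDerivAt_id x).const_mul b).const_add a
    have h2 : HasDerivAt (fun t : ℝ => c*t^2) (c*(2*x)) x := by
      simpa using (hasDerivAt_pow 2 x).const_mul c
    have := h1.fun_add h2
    exact this.congr_deriv (by ring)
  have := hE.fun_mul hP
  exact this.congr_deriv (by ring)

theorem stmt_13 :
    ∀ s t : ℝ, 0 < s → 0 < t →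
      0 < -2 + (2 - 2*s + s^2) * Real.exp s ∧
      iteratedDeriv 3 (fun t' : ℝ => -t'^2 + Real.exp s * (1 + t')^2
        + Real.exp (s + s*t') * (-1 - 2*t' + s*t' + s*t'^2)) t
        = s^3 * Real.exp (s + s*t) * (2 + 4*t + s*t + s*t^2) ∧
      0 < s^3 * Real.exp (s + s*t) * (2 + 4*t + s*t + s*t^2) := by
  intro s t hs ht
  refine ⟨?_, ?_, ?_⟩
  · have h := Real.quadratic_le_exp_of_nonneg hs.le
    nlinarith [sq_nonneg s, sq_nonneg (s - 1), sq_nonneg (s^2), pow_pos hs 4]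
  · have hd1 : deriv (fun t' : ℝ => -t'^2 + Real.exp s * (1 + t')^2
        + Real.exp (s + s*t') * (-1 - 2*t' + s*t' + s*t'^2))
        = fun x : ℝ => -(2*x) + Real.exp s * (2*(1+x))
          + Real.exp (s + s*x) * (-2 + s^2*x + s^2*x^2) := by
      funext x
      have h1 : HasDerivAt (fun t' : ℝ => -t'^2) (-(2*x)) x := by
        simpa using (hasDerivAt_pow 2 x).fun_neg
      have h2 : HasDerivAt (fun t' : ℝ => Real.exp s * (1 + t')^2)
          (Real.exp s * (2*(1+x))) x := by
        have : HasDerivAt (fun t' : ℝ => (1 + t')^2) (2*(1+x)^1*1) x :=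
          ((hasDerivAt_id x).const_add 1).pow 2
        simpa using this.const_mul (Real.exp s)
      have h3 : HasDerivAt (fun t' : ℝ => Real.exp (s + s*t') * (-1 - 2*t' + s*t' + s*t'^2))
          (Real.exp (s + s*x) * (-2 + s^2*x + s^2*x^2)) x := by
        have hfun : (fun t' : ℝ => Real.exp (s + s*t') * (-1 - 2*t' + s*t' + s*t'^2))
            = (fun t' : ℝ => Real.exp (s + s*t') * ((-1) + (s-2)*t' + s*t'^2)) := by
          funext y; ring
        rw [hfun]
        have := hEP s (-1) (s-2) s x
        convert this using 1; ring
      exact ((h1.add h2).add h3).deriv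
    have hd2 : deriv (fun x : ℝ => -(2*x) + Real.exp s * (2*(1+x))
          + Real.exp (s + s*x) * (-2 + s^2*x + s^2*x^2))
        = fun x : ℝ => -2 + Real.exp s * 2
          + Real.exp (s + s*x) * ((-2*s + s^2) + (s^3 + 2*s^2)*x + s^3*x^2) := by
      funext x
      have h1 : HasDerivAt (fun t' : ℝ => -(2*t')) (-2) x := by
        simpa using ((hasDerivAt_id x).const_mul 2).fun_neg
      have h2 : HasDerivAt (fun t' : ℝ => Real.exp s * (2*(1+t'))) (Real.exp s * 2) x := by
        have : HasDerivAt (fun t' : ℝ => 2*(1+t')) 2 x := by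
          simpa using ((hasDerivAt_id x).const_add 1).const_mul 2
        simpa using this.const_mul (Real.exp s)
      have h3 : HasDerivAt (fun t' : ℝ => Real.exp (s + s*t') * (-2 + s^2*t' + s^2*t'^2))
          (Real.exp (s + s*x) * ((-2*s + s^2) + (s^3 + 2*s^2)*x + s^3*x^2)) x := by
        have := hEP s (-2) (s^2) (s^2) x
        convert this using 1; ring
      exact ((h1.add h2).add h3).deriv
    have hd3 : deriv (fun x : ℝ => -2 + Real.exp s * 2
          + Real.exp (s + s*x) * ((-2*s + s^2) + (s^3 + 2*s^2)*x + s^3*x^2)) t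
        = s^3 * Real.exp (s + s*t) * (2 + 4*t + s*t + s*t^2) := by
      have h3 := hEP s (-2*s + s^2) (s^3 + 2*s^2) (s^3) t
      have h := (h3.const_add (-2 + Real.exp s * 2)).deriv
      rw [h]; ring
    have key : iteratedDeriv 3 (fun t' : ℝ => -t'^2 + Real.exp s * (1 + t')^2
        + Real.exp (s + s*t') * (-1 - 2*t' + s*t' + s*t'^2))
        = deriv (deriv (deriv (fun t' : ℝ => -t'^2 + Real.exp s * (1 + t')^2
        + Real.exp (s + s*t') * (-1 - 2*t' + s*t' + s*t'^2)))) := by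
      have h3 : (3 : ℕ) = 2 + 1 := rfl
      have h2 : (2 : ℕ) = 1 + 1 := rfl
      rw [h3, iteratedDeriv_succ, h2, iteratedDeriv_succ, iteratedDeriv_one]
    rw [key, hd1, hd2, hd3]
  · have h1 : (0:ℝ) < 2 + 4*t + s*t + s*t^2 := by positivity
    positivity
end

section
/- For t ∈ (0,1) and r > 0, the function g(t,r) = −1 + (1 + (r+1)log t)/t^{r+1} + ((r+1)/r)(1 − (1 + (t+1)(r+1))/t^{r+1}) is strictly negative. -/
theorem stmt_14 :
    ∀ t r : ℝ, 0 < t → t < 1 → 0 < r →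
      -1 + (1 + (r+1) * Real.log t) / t ^ (r+1)
        + ((r+1)/r) * (1 - (1 + (t+1)*(r+1)) / t ^ (r+1)) < 0 := by
  intro t r ht ht1 hr
  have hT : (0:ℝ) < t ^ (r+1) := Real.rpow_pos_of_pos ht _
  have hT1 : t ^ (r+1) < 1 := Real.rpow_lt_one ht.le ht1 (by linarith)
  have hL : Real.log t < 0 := Real.log_neg ht ht1
  have key : -1 + (1 + (r+1) * Real.log t) / t ^ (r+1)
        + ((r+1)/r) * (1 - (1 + (t+1)*(r+1)) / t ^ (r+1))
      = (t ^ (r+1) + r*(r+1)*Real.log t - 1 - (r+1)^2*(t+1)) / (r * t ^ (r+1)) := by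
    field_simp
    ring
  rw [key]
  apply div_neg_of_neg_of_pos
  · nlinarith [mul_pos (mul_pos hr (by linarith : (0:ℝ) < r+1)) (neg_pos.mpr hL),
      sq_nonneg (r+1)]
  · positivity
end

section
/- Let μ, σ, q > 0 with c̄ > qσ²/(2μ), and let θ₁(c̄) > 0 > θ₂(c̄) be the roots of (σ²/2)z² + (μ−c̄)z − q = 0. Then the limit as x → 0⁺ of ∂_x b₀(x, c̄) equals (c̄² + qσ² − c̄(μ + √((c̄−μ)² + 2qσ²)))/(2qσ²√((c̄−μ)² + 2qσ²)), and this quantity is strictly negative; conversely if c̄ ≤ qσ²/(2μ) it is nonnegative. -/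
open Real Filter Set

noncomputable def auxF (a b k c x : ℝ) : ℝ :=
  Real.exp ((a+b)*x) * ((b-a)*c + k + k*(b-a)*x) - k * Real.exp (2*b*x)
    + (a*c) * Real.exp (a*x) - (b*c) * Real.exp (b*x)

noncomputable def auxF1 (a b k c x : ℝ) : ℝ :=
  Real.exp ((a+b)*x) * ((a+b)*((b-a)*c + k + k*(b-a)*x) + k*(b-a)) - (2*b*k) * Real.exp (2*b*x)
    + (a^2*c) * Real.exp (a*x) - (b^2*c) * Real.exp (b*x)

noncomputable def auxF2 (a b k c x : ℝ) : ℝ :=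
  Real.exp ((a+b)*x) * ((a+b)*((a+b)*((b-a)*c + k + k*(b-a)*x) + k*(b-a)) + (a+b)*(k*(b-a)))
    - (4*b^2*k) * Real.exp (2*b*x) + (a^3*c) * Real.exp (a*x) - (b^3*c) * Real.exp (b*x)

noncomputable def auxG (a b x : ℝ) : ℝ := (Real.exp (a*x) - Real.exp (b*x))^2

noncomputable def auxG1 (a b x : ℝ) : ℝ :=
  2*(Real.exp (a*x) - Real.exp (b*x))*(a*Real.exp (a*x) - b*Real.exp (b*x))

noncomputable def auxG2 (a b x : ℝ) : ℝ :=
  2*(a*Real.exp (a*x) - b*Real.exp (b*x))^2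
    + 2*(Real.exp (a*x) - Real.exp (b*x))*(a^2*Real.exp (a*x) - b^2*Real.exp (b*x))

lemma hexp (c x : ℝ) : HasDerivAt (fun y : ℝ => Real.exp (c*y)) (c * Real.exp (c*x)) x := by
  convert ((hasDerivAt_id x).const_mul c).exp using 1
  rfl
  show c * rexp (c * x) = rexp (c * x) * (c * 1); ring

lemma hasDerivAt_auxF (a b k c x : ℝ) : HasDerivAt (fun y => auxF a b k c y) (auxF1 a b k c x) x := by
  have h1 := (hexp (a+b) x).mul (((hasDerivAt_id x).const_mul (k*(b-a))).const_add ((b-a)*c + k))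
  have h2 := (hexp (2*b) x).const_mul k
  have h3 := (hexp a x).const_mul (a*c)
  have h4 := (hexp b x).const_mul (b*c)
  have H := ((h1.sub h2).add h3).sub h4
  have heq : auxF1 a b k c x =
      ((a+b) * Real.exp ((a+b)*x) * ((b-a)*c + k + k*(b-a)*x)
        + Real.exp ((a+b)*x) * (k*(b-a)*1)
        - k * (2*b * Real.exp (2*b*x))
        + a*c * (a * Real.exp (a*x))
        - b*c * (b * Real.exp (b*x))) := by
    unfold auxF1; ring
  rw [heq]
  exact H

lemma hasDerivAt_auxF1 (a b k c x : ℝ) : HasDerivAt (fun y => auxF1 a b k c y) (auxF2 a b k c x) x := by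
  have h1 := (hexp (a+b) x).mul ((((hasDerivAt_id x).const_mul (k*(b-a))).const_add ((b-a)*c + k)).const_mul (a+b) |>.add_const (k*(b-a)))
  have h2 := (hexp (2*b) x).const_mul (2*b*k)
  have h3 := (hexp a x).const_mul (a^2*c)
  have h4 := (hexp b x).const_mul (b^2*c)
  have H := ((h1.sub h2).add h3).sub h4
  have heq : auxF2 a b k c x =
      ((a+b) * Real.exp ((a+b)*x) * ((a+b)*((b-a)*c + k + k*(b-a)*x) + k*(b-a))
        + Real.exp ((a+b)*x) * ((a+b)*(k*(b-a)*1))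
        - 2*b*k * (2*b * Real.exp (2*b*x))
        + a^2*c * (a * Real.exp (a*x))
        - b^2*c * (b * Real.exp (b*x))) := by
    unfold auxF2; ring
  rw [heq]
  exact H

lemma hasDerivAt_auxG (a b x : ℝ) : HasDerivAt (fun y => auxG a b y) (auxG1 a b x) x := by
  have H := (((hexp a x).sub (hexp b x)).pow 2)
  have heq : auxG1 a b x = (2:ℕ) * (Real.exp (a*x) - Real.exp (b*x))^(2-1)
      * (a * Real.exp (a*x) - b * Real.exp (b*x)) := by
    unfold auxG1; push_cast; ring
  rw [heq]
  exact H

lemma hasDerivAt_auxG1 (a b x : ℝ) : HasDerivAt (fun y => auxG1 a b y) (auxG2 a b x) x := by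
  have H := (((hexp a x).sub (hexp b x)).const_mul 2).mul (((hexp a x).const_mul a).sub ((hexp b x).const_mul b))
  have heq : auxG2 a b x =
      (2 * (a * Real.exp (a*x) - b * Real.exp (b*x))) * (a*Real.exp (a*x) - b*Real.exp (b*x))
        + 2*(Real.exp (a*x) - Real.exp (b*x)) * (a*(a*Real.exp (a*x)) - b*(b*Real.exp (b*x))) := by
    unfold auxG2; ring
  rw [heq]
  exact H

lemma cont_auxF1 (a b k c : ℝ) : Continuous (fun x => auxF1 a b k c x) := by
  unfold auxF1; fun_prop

lemma cont_auxF2 (a b k c : ℝ) : Continuous (fun x => auxF2 a b k c x) := by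
  unfold auxF2; fun_prop

lemma cont_auxG1 (a b : ℝ) : Continuous (fun x => auxG1 a b x) := by
  unfold auxG1; fun_prop

lemma cont_auxG2 (a b : ℝ) : Continuous (fun x => auxG2 a b x) := by
  unfold auxG2; fun_prop

lemma aux_lhop (a b k c : ℝ) (ha : 0 < a) (hb : b < 0) :
    Tendsto (fun x => auxF a b k c x / auxG a b x) (nhdsWithin 0 (Set.Ioi 0))
      (nhds (auxF2 a b k c 0 / auxG2 a b 0)) := by
  have hab : b < a := hb.trans ha
  have hG2pos : 0 < auxG2 a b 0 := by
    unfold auxG2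
    simp only [mul_zero, Real.exp_zero]
    nlinarith [sq_nonneg (a - b)]
  -- step 2: continuity limit of F2/G2
  have step2 : Tendsto (fun x => auxF2 a b k c x / auxG2 a b x) (nhdsWithin 0 (Set.Ioi 0))
      (nhds (auxF2 a b k c 0 / auxG2 a b 0)) := by
    exact (((cont_auxF2 a b k c).tendsto 0).div ((cont_auxG2 a b).tendsto 0)
      hG2pos.ne').mono_left nhdsWithin_le_nhds
  -- eventual nonvanishing of G2 near 0
  have hG2ne : ∀ᶠ x in nhdsWithin (0:ℝ) (Set.Ioi 0), auxG2 a b x ≠ 0 := by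
    have h1 : ∀ᶠ x in nhds (0:ℝ), 0 < auxG2 a b x :=
      ((cont_auxG2 a b).tendsto 0).eventually (eventually_gt_nhds hG2pos)
    exact (h1.filter_mono nhdsWithin_le_nhds).mono (fun x hx => hx.ne')
  -- G1 positive on Ioi 0
  have hG1pos : ∀ x : ℝ, 0 < x → 0 < auxG1 a b x := by
    intro x hx
    have h1 : Real.exp (b*x) < Real.exp (a*x) := by
      apply Real.exp_lt_exp.2; nlinarith
    have h2 : 0 < a * Real.exp (a*x) - b * Real.exp (b*x) := by
      nlinarith [Real.exp_pos (a*x), Real.exp_pos (b*x)]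
    unfold auxG1
    nlinarith
  have hG1ne : ∀ᶠ x in nhdsWithin (0:ℝ) (Set.Ioi 0), auxG1 a b x ≠ 0 := by
    filter_upwards [self_mem_nhdsWithin] with x hx
    exact (hG1pos x hx).ne'
  have hF1_0 : auxF1 a b k c 0 = 0 := by
    unfold auxF1; simp only [mul_zero, Real.exp_zero]; ring
  have hG1_0 : auxG1 a b 0 = 0 := by
    unfold auxG1; simp only [mul_zero, Real.exp_zero]; ring
  have hF_0 : auxF a b k c 0 = 0 := by
    unfold auxF; simp only [mul_zero, Real.exp_zero]; ring
  have hG_0 : auxG a b 0 = 0 := by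
    unfold auxG; simp only [mul_zero, Real.exp_zero]; ring
  -- step 1: L'Hopital on F1/G1
  have step1 : Tendsto (fun x => auxF1 a b k c x / auxG1 a b x) (nhdsWithin 0 (Set.Ioi 0))
      (nhds (auxF2 a b k c 0 / auxG2 a b 0)) := by
    apply HasDerivAt.lhopital_zero_nhdsGT
      (Filter.Eventually.of_forall (fun x => hasDerivAt_auxF1 a b k c x))
      (Filter.Eventually.of_forall (fun x => hasDerivAt_auxG1 a b x))
      hG2ne ?_ ?_ step2
    · have := ((cont_auxF1 a b k c).tendsto 0).mono_left
        (nhdsWithin_le_nhds (s := Set.Ioi (0:ℝ)))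
      rwa [hF1_0] at this
    · have := ((cont_auxG1 a b).tendsto 0).mono_left
        (nhdsWithin_le_nhds (s := Set.Ioi (0:ℝ)))
      rwa [hG1_0] at this
  -- step 0: L'Hopital on F/G
  apply HasDerivAt.lhopital_zero_nhdsGT
    (Filter.Eventually.of_forall (fun x => hasDerivAt_auxF a b k c x))
    (Filter.Eventually.of_forall (fun x => hasDerivAt_auxG a b x))
    hG1ne ?_ ?_ step1
  · have hFc : Continuous (fun x => auxF a b k c x) := by unfold auxF; fun_prop
    have := (hFc.tendsto 0).mono_left (nhdsWithin_le_nhds (s := Set.Ioi (0:ℝ)))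
    rwa [hF_0] at this
  · have hGc : Continuous (fun x => auxG a b x) := by unfold auxG; fun_prop
    have := (hGc.tendsto 0).mono_left (nhdsWithin_le_nhds (s := Set.Ioi (0:ℝ)))
    rwa [hG_0] at this

set_option maxHeartbeats 2000000 in
theorem stmt_15 (μ σ q cb θ₁ θ₂ θ₂' : ℝ)
    (hμ : 0 < μ) (hσ : 0 < σ) (hq : 0 < q) (hcb : 0 ≤ cb)
    (hθ₁ : θ₁ = (cb - μ + Real.sqrt ((cb - μ)^2 + 2*q*σ^2)) / σ^2)
    (hθ₂ : θ₂ = (cb - μ - Real.sqrt ((cb - μ)^2 + 2*q*σ^2)) / σ^2)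
    (hθ₂' : θ₂' = (1 - (cb - μ)/Real.sqrt ((cb - μ)^2 + 2*q*σ^2))/σ^2)
    (b₀ : ℝ → ℝ)
    (hb₀ : ∀ x, b₀ x = (-(1/q) * (1 - Real.exp (θ₂ * x)) + (cb/q) * θ₂' * Real.exp (θ₂ * x) * x)
      / (Real.exp (θ₁ * x) - Real.exp (θ₂ * x)))
    (L : ℝ)
    (hL : L = (cb^2 + q*σ^2 - cb*(μ + Real.sqrt ((cb - μ)^2 + 2*q*σ^2)))
      / (2*q*σ^2 * Real.sqrt ((cb - μ)^2 + 2*q*σ^2))) :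
    Filter.Tendsto (deriv b₀) (nhdsWithin 0 (Set.Ioi 0)) (nhds L) ∧
    (q * σ^2 / (2*μ) < cb → L < 0) ∧
    (cb ≤ q * σ^2 / (2*μ) → 0 ≤ L) := by
  have hσ2 : (0:ℝ) < σ^2 := by positivity
  set s : ℝ := Real.sqrt ((cb - μ)^2 + 2*q*σ^2) with hs
  have hRpos : (0:ℝ) < (cb - μ)^2 + 2*q*σ^2 := by positivity
  have hs0 : 0 < s := Real.sqrt_pos.2 hRpos
  have hs2 : s^2 = (cb - μ)^2 + 2*q*σ^2 := Real.sq_sqrt hRpos.le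
  have hmlt : cb - μ < s ∧ -(cb - μ) < s := by
    constructor <;> nlinarith [sq_nonneg (s - (cb - μ)), sq_nonneg (s + (cb - μ))]
  have hθ₁pos : 0 < θ₁ := by
    rw [hθ₁]; apply div_pos _ hσ2; linarith [hmlt.2]
  have hθ₂neg : θ₂ < 0 := by
    rw [hθ₂]; apply div_neg_of_neg_of_pos _ hσ2; linarith [hmlt.1]
  have hab : θ₂ < θ₁ := hθ₂neg.trans hθ₁pos
  -- part 1 : the limit
  have hden : ∀ x ∈ Set.Ioi (0:ℝ), deriv b₀ x = auxF θ₁ θ₂ (cb*θ₂'/q) (1/q) x / auxG θ₁ θ₂ x := by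
    intro x hx
    have hxpos : (0:ℝ) < x := hx
    have hDpos : 0 < Real.exp (θ₁*x) - Real.exp (θ₂*x) := by
      have := Real.exp_lt_exp.2 (by nlinarith : θ₂*x < θ₁*x)
      linarith
    have hN : HasDerivAt (fun y => -(1/q) * (1 - Real.exp (θ₂ * y)) + (cb/q) * θ₂' * Real.exp (θ₂ * y) * y)
        (-(1/q) * (-(θ₂ * Real.exp (θ₂*x))) + (((cb/q) * θ₂' * (θ₂ * Real.exp (θ₂*x))) * x + (cb/q) * θ₂' * Real.exp (θ₂*x) * 1)) x := by
      have h1 := ((hexp θ₂ x).const_sub 1).const_mul (-(1/q))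
      have h2 := (((hexp θ₂ x).const_mul ((cb/q) * θ₂')).mul (hasDerivAt_id x))
      exact h1.add h2
    have hD : HasDerivAt (fun y => Real.exp (θ₁ * y) - Real.exp (θ₂ * y))
        (θ₁ * Real.exp (θ₁*x) - θ₂ * Real.exp (θ₂*x)) x := (hexp θ₁ x).sub (hexp θ₂ x)
    have hquot := hN.div hD hDpos.ne'
    have hb : b₀ = fun y => (-(1/q) * (1 - Real.exp (θ₂ * y)) + (cb/q) * θ₂' * Real.exp (θ₂ * y) * y)
        / (Real.exp (θ₁ * y) - Real.exp (θ₂ * y)) := funext hb₀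
    rw [hb]; erw [hquot.deriv]
    unfold auxF auxG
    rw [show (θ₁+θ₂)*x = θ₁*x + θ₂*x by ring, Real.exp_add,
      show 2*θ₂*x = θ₂*x + θ₂*x by ring, Real.exp_add]
    field_simp
    ring
  have hEq : deriv b₀ =ᶠ[nhdsWithin (0:ℝ) (Set.Ioi 0)]
      fun x => auxF θ₁ θ₂ (cb*θ₂'/q) (1/q) x / auxG θ₁ θ₂ x := by
    filter_upwards [self_mem_nhdsWithin] with x hx using hden x hx
  have hval : auxF2 θ₁ θ₂ (cb*θ₂'/q) (1/q) 0 / auxG2 θ₁ θ₂ 0 = L := by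
    have hG2v : auxG2 θ₁ θ₂ 0 = 8*s^2/σ^4 := by
      unfold auxG2
      simp only [mul_zero, Real.exp_zero, mul_one]
      rw [hθ₁, hθ₂]
      field_simp
      ring
    have hF2v : auxF2 θ₁ θ₂ (cb*θ₂'/q) (1/q) 0 = 4*(cb^2+q*σ^2-cb*(μ+s))*s/(q*σ^6) := by
      unfold auxF2
      simp only [mul_zero, Real.exp_zero, mul_one, one_mul]
      rw [hθ₁, hθ₂, hθ₂']
      field_simp
      linear_combination (2*s^2) * hs2
    rw [hF2v, hG2v, hL]
    field_simp
    ring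
  refine ⟨?_, ?_, ?_⟩
  · rw [Filter.tendsto_congr' hEq, ← hval]
    exact aux_lhop θ₁ θ₂ (cb*θ₂'/q) (1/q) hθ₁pos hθ₂neg
  · intro hcnd
    have hcbpos : 0 < cb := lt_trans (by positivity) hcnd
    have hnum : cb^2 + q*σ^2 - cb*(μ + s) < 0 := by
      have h1 : q*σ^2 < 2*μ*cb := by
        rw [div_lt_iff₀ (by linarith : (0:ℝ) < 2*μ)] at hcnd; linarith
      have key2 : (cb^2 + q*σ^2 - cb*μ)^2 < (cb*s)^2 := by
        have hp : 0 < q*σ^2*(2*μ*cb - q*σ^2) := by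
          apply mul_pos (by positivity); linarith
        nlinarith [hs2]
      have hcbs : 0 ≤ cb*s := mul_nonneg hcb hs0.le
      by_contra hX
      push_neg at hX
      have hX' : cb*s ≤ cb^2 + q*σ^2 - cb*μ := by linarith
      nlinarith [mul_le_mul hX' hX' hcbs (le_trans hcbs hX')]
    rw [hL]
    exact div_neg_of_neg_of_pos hnum (by positivity)
  · intro hcnd
    have h1 : 2*μ*cb ≤ q*σ^2 := by
      rw [le_div_iff₀ (by linarith : (0:ℝ) < 2*μ)] at hcnd; linarith
    have hnum : 0 ≤ cb^2 + q*σ^2 - cb*(μ + s) := by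
      have hXnn : 0 ≤ cb^2 + q*σ^2 - cb*μ := by nlinarith [mul_nonneg hμ.le hcb]
      have key : (cb*s)^2 ≤ (cb^2 + q*σ^2 - cb*μ)^2 := by
        have hp : 0 ≤ q*σ^2*(q*σ^2 - 2*μ*cb) := by
          apply mul_nonneg (by positivity); linarith
        nlinarith [hs2]
      by_contra hX
      push_neg at hX
      have hX' : cb^2 + q*σ^2 - cb*μ < cb*s := by linarith
      nlinarith [mul_self_lt_mul_self hXnn hX']
    rw [hL]
    positivity
end

section
/- Let μ, σ, q > 0 with c̄ > qσ²/(2μ). Define b₀(x, c̄) as above. Then there exists a unique z̄ > 0 such that ∂_x b₀(z̄, c̄) = 0; moreover ∂_x b₀(x, c̄) < 0 for x ∈ (0, z̄), ∂_x b₀(x, c̄) > 0 for x > z̄, and ∂_{xx} b₀(z̄, c̄) > 0. -/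
open Filter Set


lemma expD (c x : ℝ) : HasDerivAt (fun t : ℝ => Real.exp (c*t)) (c * Real.exp (c*x)) x := by
  have h := (Real.hasDerivAt_exp (c*x)).comp x ((hasDerivAt_id x).const_mul c)
  simpa [Function.comp_def, mul_comm] using h

lemma key_lemma (f f' : ℝ → ℝ) (hd : ∀ x, HasDerivAt f (f' x) x) (hf0 : f 0 = 0)
    (y : ℝ) (hy : 0 < y)
    (hneg : ∀ x, 0 < x → x < y → f' x < 0)
    (hpos : ∀ x, y < x → 0 < f' x)
    (hev : ∀ᶠ x in atTop, 0 < f x) :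
    ∃ z, y < z ∧ f z = 0 ∧ (∀ x, 0 < x → x < z → f x < 0) ∧
      (∀ x, z < x → 0 < f x) ∧ (∀ x, 0 < x → f x = 0 → x = z) := by
  have hc : Continuous f := continuous_iff_continuousAt.2 fun x => (hd x).continuousAt
  have hanti : StrictAntiOn f (Icc 0 y) := by
    apply strictAntiOn_of_deriv_neg (convex_Icc 0 y) hc.continuousOn
    intro x hx
    rw [interior_Icc] at hx
    rw [(hd x).deriv]
    exact hneg x hx.1 hx.2
  have hmono : StrictMonoOn f (Ici y) := by
    apply strictMonoOn_of_deriv_pos (convex_Ici y) hc.continuousOn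
    intro x hx
    rw [interior_Ici] at hx
    rw [(hd x).deriv]
    exact hpos x hx
  have hfy : f y < 0 := by
    have := hanti ⟨le_rfl, hy.le⟩ ⟨hy.le, le_rfl⟩ hy
    rwa [hf0] at this
  obtain ⟨X, hfX, hXy⟩ := (hev.and (eventually_gt_atTop y)).exists
  have h0mem : (0:ℝ) ∈ Ioo (f y) (f X) := ⟨hfy, hfX⟩
  obtain ⟨z, hzmem, hz0⟩ := intermediate_value_Ioo hXy.le hc.continuousOn h0mem
  have hsneg : ∀ x, 0 < x → x < z → f x < 0 := by
    intro x hx0 hxz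
    rcases lt_or_ge x y with h | h
    · have := hanti (⟨le_rfl, hy.le⟩ : (0:ℝ) ∈ Icc 0 y) ⟨hx0.le, h.le⟩ hx0
      rwa [hf0] at this
    · have := hmono h hzmem.1.le hxz
      rwa [hz0] at this
  have hspos : ∀ x, z < x → 0 < f x := by
    intro x hzx
    have := hmono hzmem.1.le (hzmem.1.trans hzx).le hzx
    rwa [hz0] at this
  refine ⟨z, hzmem.1, hz0, hsneg, hspos, ?_⟩
  intro x hx0 hfx
  by_contra hne
  rcases lt_or_gt_of_ne hne with h | h
  · exact absurd hfx (ne_of_lt (hsneg x hx0 h))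
  · exact absurd hfx (ne_of_gt (hspos x h))

noncomputable def Wf (a b k q x : ℝ) : ℝ :=
  (k - (a-b)/q) - k*(a-b)*x - k*Real.exp ((b-a)*x) + (a/q)*Real.exp ((-b)*x) - (b/q)*Real.exp ((-a)*x)

noncomputable def W1f (a b k q x : ℝ) : ℝ :=
  -(k*(a-b)) + k*(a-b)*Real.exp ((b-a)*x) - (a*b/q)*Real.exp ((-b)*x) + (a*b/q)*Real.exp ((-a)*x)

noncomputable def W2f (a b k q x : ℝ) : ℝ :=
  -(k*(a-b)^2)*Real.exp ((b-a)*x) + (a*b/q)*b*Real.exp ((-b)*x) - (a*b/q)*a*Real.exp ((-a)*x)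

noncomputable def Pf (a b k q x : ℝ) : ℝ :=
  -(k*(a-b)^2) + (a*b*b/q)*Real.exp ((a-2*b)*x) + (-(a*b*a)/q)*Real.exp ((-b)*x)

lemma Wf_deriv (a b k q x : ℝ) : HasDerivAt (Wf a b k q) (W1f a b k q x) x := by
  unfold Wf W1f
  have h1 := ((expD (b-a) x).const_mul k)
  have h2 := ((expD (-b) x).const_mul (a/q))
  have h3 := ((expD (-a) x).const_mul (b/q))
  have h4 : HasDerivAt (fun t : ℝ => (k - (a-b)/q) - k*(a-b)*t) (-(k*(a-b))) x := by
    simpa using ((hasDerivAt_id x).const_mul (k*(a-b))).const_sub (k - (a-b)/q)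
  have := ((h4.sub h1).add h2).sub h3
  exact this.congr_deriv (by ring)

lemma W1f_deriv (a b k q x : ℝ) : HasDerivAt (W1f a b k q) (W2f a b k q x) x := by
  unfold W1f W2f
  have h1 := ((expD (b-a) x).const_mul (k*(a-b)))
  have h2 := ((expD (-b) x).const_mul (a*b/q))
  have h3 := ((expD (-a) x).const_mul (a*b/q))
  have := (((hasDerivAt_const x (-(k*(a-b)))).add h1).sub h2).add h3
  exact this.congr_deriv (by ring)

lemma Pf_eq (a b k q x : ℝ) : Pf a b k q x = W2f a b k q x * Real.exp ((a-b)*x) := by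
  unfold Pf W2f
  have e1 : Real.exp ((b-a)*x) * Real.exp ((a-b)*x) = 1 := by
    rw [← Real.exp_add, show (b-a)*x + (a-b)*x = 0 by ring, Real.exp_zero]
  have e2 : Real.exp ((-b)*x) * Real.exp ((a-b)*x) = Real.exp ((a-2*b)*x) := by
    rw [← Real.exp_add]; ring_nf
  have e3 : Real.exp ((-a)*x) * Real.exp ((a-b)*x) = Real.exp ((-b)*x) := by
    rw [← Real.exp_add]; ring_nf
  linear_combination (k*(a-b)^2)*e1 - (a*b*b/q)*e2 + (a*b*a/q)*e3

lemma Pf_strictMono (a b k q : ℝ) (ha : 0 < a) (hb : b < 0) (hq : 0 < q) :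
    StrictMono (Pf a b k q) := by
  intro x y hxy
  unfold Pf
  have h1 : Real.exp ((a-2*b)*x) < Real.exp ((a-2*b)*y) := by
    apply Real.exp_lt_exp.2; nlinarith
  have h2 : Real.exp ((-b)*x) < Real.exp ((-b)*y) := by
    apply Real.exp_lt_exp.2; nlinarith
  have hb2 : 0 < b^2 := by nlinarith
  have hc1 : 0 < a*b*b/q := by
    have h : a*b*b/q = a*b^2/q := by ring
    rw [h]; exact div_pos (mul_pos ha hb2) hq
  have hc2 : 0 < -(a*b*a)/q := by
    have h : -(a*b*a)/q = a^2*(-b)/q := by ring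
    rw [h]; exact div_pos (mul_pos (pow_pos ha 2) (neg_pos.2 hb)) hq
  gcongr

lemma quadbound (t : ℝ) (ht : 0 ≤ t) : t^2/4 ≤ Real.exp t := by
  have h := Real.add_one_le_exp (t/2)
  have h2 : Real.exp (t/2) * Real.exp (t/2) = Real.exp t := by
    rw [← Real.exp_add]; ring_nf
  nlinarith [Real.exp_pos (t/2)]

lemma aux_main (a b k q : ℝ) (ha : 0 < a) (hb : b < 0) (hq : 0 < q) (hk : 0 < k)
    (hks : -(a*b)/q < k*(a-b)) :
    ∃ z, 0 < z ∧ Wf a b k q z = 0 ∧ (∀ x, 0 < x → x < z → Wf a b k q x < 0) ∧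
      (∀ x, z < x → 0 < Wf a b k q x) ∧ 0 < W1f a b k q z ∧
      (∀ x, 0 < x → Wf a b k q x = 0 → x = z) := by
  have hs : 0 < a - b := by linarith
  have habq : a*b/q < 0 := div_neg_of_neg_of_pos (mul_neg_of_pos_of_neg ha hb) hq
  have hEb : Tendsto (fun x : ℝ => Real.exp ((-b)*x)) atTop atTop :=
    Real.tendsto_exp_atTop.comp (Tendsto.const_mul_atTop (neg_pos.2 hb) tendsto_id)
  -- P at 0 is negative
  have hP0 : Pf a b k q 0 < 0 := by
    simp only [Pf, mul_zero, Real.exp_zero, mul_one]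
    have e : -(k*(a-b)^2) + a*b*b/q + -(a*b*a)/q = (-(a*b)/q - k*(a-b))*(a-b) := by ring
    rw [e]
    exact mul_neg_of_neg_of_pos (by linarith) hs
  -- P eventually positive, get a point X
  have hc2 : 0 < -(a*b*a)/q := by
    have h : -(a*b*a)/q = a^2*(-b)/q := by ring
    rw [h]; exact div_pos (mul_pos (pow_pos ha 2) (neg_pos.2 hb)) hq
  have hc1 : 0 ≤ a*b*b/q := by
    have h : a*b*b/q = a*b^2/q := by ring
    rw [h]; positivity
  obtain ⟨X, hXM, hX0⟩ :=
    ((hEb.eventually_ge_atTop ((k*(a-b)^2)/(-(a*b*a)/q) + 1)).and (eventually_gt_atTop 0)).exists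
  have hPX : 0 < Pf a b k q X := by
    simp only [Pf]
    have h1 : 0 ≤ (a*b*b/q)*Real.exp ((a-2*b)*X) := by positivity
    have h2 : (k*(a-b)^2)/(-(a*b*a)/q) * (-(a*b*a)/q) = k*(a-b)^2 :=
      div_mul_cancel₀ _ hc2.ne'
    nlinarith [mul_le_mul_of_nonneg_left hXM hc2.le]
  have hPcont : Continuous (Pf a b k q) := by
    unfold Pf; fun_prop
  obtain ⟨y₂, hy₂mem, hy₂0⟩ := intermediate_value_Ioo hX0.le hPcont.continuousOn
    (⟨hP0, hPX⟩ : (0:ℝ) ∈ Ioo (Pf a b k q 0) (Pf a b k q X))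
  have hPmono := Pf_strictMono a b k q ha hb hq
  -- signs of W2
  have hW2neg : ∀ x, 0 < x → x < y₂ → W2f a b k q x < 0 := by
    intro x hx0 hxy
    have hP : Pf a b k q x < 0 := by
      have := hPmono hxy; rw [hy₂0] at this; linarith
    nlinarith [Pf_eq a b k q x, Real.exp_pos ((a-b)*x)]
  have hW2pos : ∀ x, y₂ < x → 0 < W2f a b k q x := by
    intro x hxy
    have hP : 0 < Pf a b k q x := by
      have := hPmono hxy; rw [hy₂0] at this; linarith
    nlinarith [Pf_eq a b k q x, Real.exp_pos ((a-b)*x)]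
  -- apply key lemma to W1
  have hW10 : W1f a b k q 0 = 0 := by
    simp only [W1f, mul_zero, Real.exp_zero, mul_one]; ring
  have hW1ev : ∀ᶠ x in atTop, 0 < W1f a b k q x := by
    filter_upwards [hEb.eventually_ge_atTop ((k*(a-b) - a*b/q)/(-(a*b/q)) + 1),
      eventually_ge_atTop 0] with x h1 h2
    have hE4 : Real.exp ((-a)*x) ≤ 1 := by
      rw [Real.exp_le_one_iff]; nlinarith
    have hE2 : 0 ≤ k*(a-b)*Real.exp ((b-a)*x) := by positivity
    have hnb : (0:ℝ) < -(a*b/q) := neg_pos.2 habq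
    have h3 : (k*(a-b) - a*b/q)/(-(a*b/q)) * (-(a*b/q)) = k*(a-b) - a*b/q :=
      div_mul_cancel₀ _ hnb.ne'
    simp only [W1f]
    nlinarith [mul_le_mul_of_nonneg_left h1 (neg_pos.2 habq).le,
      mul_le_mul_of_nonpos_left hE4 habq.le]
  obtain ⟨z₁, hz₁gt, hW1z₁, hW1neg, hW1pos, _⟩ :=
    key_lemma (W1f a b k q) (W2f a b k q) (W1f_deriv a b k q) hW10 y₂ hy₂mem.1
      hW2neg hW2pos hW1ev
  have hz₁0 : 0 < z₁ := hy₂mem.1.trans hz₁gt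
  -- apply key lemma to W
  have hW0 : Wf a b k q 0 = 0 := by
    simp only [Wf, mul_zero, Real.exp_zero, mul_one]; ring
  have hWev : ∀ᶠ x in atTop, 0 < Wf a b k q x := by
    have hb2 : 0 < b^2 := by nlinarith
    have hα : 0 < a/q*(b^2/4) := mul_pos (div_pos ha hq) (by linarith)
    have hγ : 0 < (a-b)/q := div_pos hs hq
    filter_upwards [eventually_ge_atTop 1,
      eventually_ge_atTop ((k*(a-b) + (a-b)/q + 1)/(a/q*(b^2/4)))] with x h1 h2
    have hx0 : (0:ℝ) ≤ x := by linarith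
    have hE3 : Real.exp ((b-a)*x) ≤ 1 := by
      rw [Real.exp_le_one_iff]
      exact mul_nonpos_of_nonpos_of_nonneg (by linarith) hx0
    have hE5 : 0 ≤ -(b/q)*Real.exp ((-a)*x) :=
      le_of_lt (mul_pos (neg_pos.2 (div_neg_of_neg_of_pos hb hq)) (Real.exp_pos _))
    have hquad : ((-b)*x)^2/4 ≤ Real.exp ((-b)*x) := quadbound ((-b)*x) (mul_nonneg (by linarith : (0:ℝ) ≤ -b) hx0)
    have hA : a/q*(b^2/4)*x^2 ≤ a/q*Real.exp ((-b)*x) := by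
      have := mul_le_mul_of_nonneg_left hquad (le_of_lt (div_pos ha hq))
      calc a/q*(b^2/4)*x^2 = a/q*(((-b)*x)^2/4) := by ring
        _ ≤ a/q*Real.exp ((-b)*x) := this
    have hB : k*Real.exp ((b-a)*x) ≤ k := by
      calc k*Real.exp ((b-a)*x) ≤ k*1 := mul_le_mul_of_nonneg_left hE3 hk.le
        _ = k := mul_one k
    have h2' : k*(a-b) + (a-b)/q + 1 ≤ (a/q*(b^2/4))*x := by
      rw [div_le_iff₀ hα] at h2; linarith [h2]
    have hD : (k*(a-b) + (a-b)/q + 1)*x ≤ a/q*(b^2/4)*x^2 := by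
      have := mul_le_mul_of_nonneg_right h2' hx0
      calc (k*(a-b) + (a-b)/q + 1)*x ≤ (a/q*(b^2/4))*x*x := this
        _ = a/q*(b^2/4)*x^2 := by ring
    have hE : (a-b)/q ≤ (a-b)/q*x := le_mul_of_one_le_right hγ.le h1
    simp only [Wf]
    linarith [hA, hB, hD, hE, hE5]
  obtain ⟨z, hzgt, hWz, hWneg, hWpos, hWuniq⟩ :=
    key_lemma (Wf a b k q) (W1f a b k q) (Wf_deriv a b k q) hW0 z₁ hz₁0
      hW1neg hW1pos hWev
  exact ⟨z, hz₁0.trans hzgt, hWz, hWneg, hWpos, hW1pos z hzgt, hWuniq⟩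

theorem stmt_16 (μ σ q cb θ₁ θ₂ θ₂' : ℝ)
    (hμ : 0 < μ) (hσ : 0 < σ) (hq : 0 < q)
    (hcb : q * σ^2 / (2*μ) < cb)
    (hθ₁ : θ₁ = (cb - μ + Real.sqrt ((cb - μ)^2 + 2*q*σ^2)) / σ^2)
    (hθ₂ : θ₂ = (cb - μ - Real.sqrt ((cb - μ)^2 + 2*q*σ^2)) / σ^2)
    (hθ₂' : θ₂' = (1 - (cb - μ)/Real.sqrt ((cb - μ)^2 + 2*q*σ^2))/σ^2)
    (b₀ : ℝ → ℝ)
    (hb₀ : ∀ x, b₀ x = (-(1/q) * (1 - Real.exp (θ₂ * x)) + (cb/q) * θ₂' * Real.exp (θ₂ * x) * x)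
      / (Real.exp (θ₁ * x) - Real.exp (θ₂ * x))) :
    ∃ z : ℝ, 0 < z ∧ deriv b₀ z = 0 ∧
      (∀ x : ℝ, 0 < x → x < z → deriv b₀ x < 0) ∧
      (∀ x : ℝ, z < x → 0 < deriv b₀ x) ∧
      0 < deriv (deriv b₀) z ∧
      (∀ z' : ℝ, 0 < z' → deriv b₀ z' = 0 → z' = z) := by
  have hσ2 : (0:ℝ) < σ^2 := by positivity
  have hcb0 : 0 < cb := lt_trans (by positivity) hcb
  have hqs : q*σ^2 < 2*μ*cb := by
    rw [div_lt_iff₀ (by positivity)] at hcb; linarith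
  have hΔ : 0 < (cb-μ)^2 + 2*q*σ^2 := by positivity
  set R := Real.sqrt ((cb - μ)^2 + 2*q*σ^2) with hRdef
  have hR0 : 0 < R := Real.sqrt_pos.2 hΔ
  have hR2 : R^2 = (cb-μ)^2 + 2*q*σ^2 := Real.sq_sqrt hΔ.le
  have h1 : cb - μ < R := lt_of_pow_lt_pow_left₀ 2 hR0.le (by nlinarith)
  have h2 : μ - cb < R := lt_of_pow_lt_pow_left₀ 2 hR0.le (by nlinarith)
  have h3 : R < cb + μ := lt_of_pow_lt_pow_left₀ 2 (by positivity) (by nlinarith)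
  have ha : 0 < θ₁ := by rw [hθ₁]; exact div_pos (by linarith) hσ2
  have hbneg : θ₂ < 0 := by rw [hθ₂]; exact div_neg_of_neg_of_pos (by linarith) hσ2
  have hs : 0 < θ₁ - θ₂ := by linarith
  have hθ₂'pos : 0 < θ₂' := by
    rw [hθ₂']
    apply div_pos _ hσ2
    have : (cb-μ)/R < 1 := (div_lt_one hR0).2 h1
    linarith
  set k := cb/q*θ₂' with hkdef
  have hk : 0 < k := mul_pos (div_pos hcb0 hq) hθ₂'pos
  have hab : θ₁*θ₂ = -(2*q)/σ^2 := by
    rw [hθ₁, hθ₂]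
    field_simp
    nlinarith [hR2]
  have hcore : q*σ^2 < cb*(R-(cb-μ)) := by
    nlinarith [mul_pos (sub_pos.2 h1) (sub_pos.2 h3), hR2]
  have hks : -(θ₁*θ₂)/q < k*(θ₁-θ₂) := by
    have eL : -(θ₁*θ₂)/q = 2/σ^2 := by rw [hab]; field_simp
    have eR : k*(θ₁-θ₂) = (2*cb*(R-(cb-μ)))/(q*(σ^2*σ^2)) := by
      rw [hkdef, hθ₂', hθ₁, hθ₂]
      field_simp
      ring
    rw [eL, eR, div_lt_div_iff₀ hσ2 (by positivity)]
    linarith [mul_lt_mul_of_pos_right hcore hσ2]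
  obtain ⟨z, hz0, hWz, hWneg, hWpos, hW1z, hWuniq⟩ := aux_main θ₁ θ₂ k q ha hbneg hq hk hks
  -- rewrite b₀
  have hb₀fun : b₀ = fun x => (-(1/q) * (1 - Real.exp (θ₂ * x)) + k * Real.exp (θ₂ * x) * x)
      / (Real.exp (θ₁ * x) - Real.exp (θ₂ * x)) := funext hb₀
  have hDpos : ∀ x : ℝ, 0 < x → 0 < Real.exp (θ₁*x) - Real.exp (θ₂*x) := by
    intro x hx
    exact sub_pos.2 (Real.exp_lt_exp.2 (mul_lt_mul_of_pos_right (by linarith : θ₂ < θ₁) hx))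
  have hNder : ∀ x : ℝ, HasDerivAt (fun x => -(1/q) * (1 - Real.exp (θ₂*x)) + k * Real.exp (θ₂*x) * x)
      ((1/q)*(θ₂*Real.exp (θ₂*x)) + k*(θ₂*Real.exp (θ₂*x)*x + Real.exp (θ₂*x))) x := by
    intro x
    have p1 : HasDerivAt (fun x : ℝ => -(1/q) * (1 - Real.exp (θ₂*x)))
        (-(1/q) * (0 - θ₂*Real.exp (θ₂*x))) x :=
      ((hasDerivAt_const x (1:ℝ)).sub (expD θ₂ x)).const_mul (-(1/q))
    have p2 : HasDerivAt (fun x : ℝ => k * (Real.exp (θ₂*x) * x))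
        (k * (θ₂*Real.exp (θ₂*x)*x + Real.exp (θ₂*x)*1)) x :=
      ((expD θ₂ x).mul (hasDerivAt_id x)).const_mul k
    have := p1.add p2
    have e : (fun x => -(1/q) * (1 - Real.exp (θ₂*x)) + k * Real.exp (θ₂*x) * x) = (fun x => -(1/q) * (1 - Real.exp (θ₂*x)) + k * (Real.exp (θ₂*x) * x)) := by
      funext y; ring
    rw [e]; exact this.congr_deriv (by ring)
  have hDder : ∀ x : ℝ, HasDerivAt (fun x => Real.exp (θ₁*x) - Real.exp (θ₂*x))
      (θ₁*Real.exp (θ₁*x) - θ₂*Real.exp (θ₂*x)) x := fun x => (expD θ₁ x).sub (expD θ₂ x)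
  have hkey : ∀ x : ℝ, ((1/q)*(θ₂*Real.exp (θ₂*x)) + k*(θ₂*Real.exp (θ₂*x)*x + Real.exp (θ₂*x)))
        * (Real.exp (θ₁*x) - Real.exp (θ₂*x))
      - (-(1/q) * (1 - Real.exp (θ₂*x)) + k * Real.exp (θ₂*x) * x)
        * (θ₁*Real.exp (θ₁*x) - θ₂*Real.exp (θ₂*x))
      = Real.exp ((θ₁+θ₂)*x) * Wf θ₁ θ₂ k q x := by
    intro x
    have m1 : Real.exp ((θ₂-θ₁)*x) * Real.exp ((θ₁+θ₂)*x) = Real.exp (θ₂*x) * Real.exp (θ₂*x) := by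
      rw [← Real.exp_add, ← Real.exp_add]; ring_nf
    have m2 : Real.exp ((-θ₂)*x) * Real.exp ((θ₁+θ₂)*x) = Real.exp (θ₁*x) := by
      rw [← Real.exp_add]; ring_nf
    have m3 : Real.exp ((-θ₁)*x) * Real.exp ((θ₁+θ₂)*x) = Real.exp (θ₂*x) := by
      rw [← Real.exp_add]; ring_nf
    have m4 : Real.exp ((θ₁+θ₂)*x) = Real.exp (θ₁*x) * Real.exp (θ₂*x) := by
      rw [← Real.exp_add]; ring_nf
    simp only [Wf]
    linear_combination (-((k - (θ₁-θ₂)/q) - k*(θ₁-θ₂)*x))*m4 + k*m1 - (θ₁/q)*m2 + (θ₂/q)*m3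
  have hderiv : ∀ x : ℝ, 0 < x → HasDerivAt b₀
      (Real.exp ((θ₁+θ₂)*x) * Wf θ₁ θ₂ k q x / (Real.exp (θ₁*x) - Real.exp (θ₂*x))^2) x := by
    intro x hx
    rw [hb₀fun]
    have h := (hNder x).div (hDder x) (hDpos x hx).ne'
    rw [hkey x] at h
    exact h
  refine ⟨z, hz0, ?_, ?_, ?_, ?_, ?_⟩
  · rw [(hderiv z hz0).deriv, hWz, mul_zero, zero_div]
  · intro x hx0 hxz
    rw [(hderiv x hx0).deriv]
    exact div_neg_of_neg_of_pos (mul_neg_of_pos_of_neg (Real.exp_pos _) (hWneg x hx0 hxz))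
      (pow_pos (hDpos x hx0) 2)
  · intro x hzx
    have hx0 : 0 < x := hz0.trans hzx
    rw [(hderiv x hx0).deriv]
    exact div_pos (mul_pos (Real.exp_pos _) (hWpos x hzx)) (pow_pos (hDpos x hx0) 2)
  · have hEq : deriv b₀ =ᶠ[nhds z] fun x => Real.exp ((θ₁+θ₂)*x) * Wf θ₁ θ₂ k q x
        / (Real.exp (θ₁*x) - Real.exp (θ₂*x))^2 := by
      filter_upwards [Ioi_mem_nhds hz0] with x hx
      exact (hderiv x hx).deriv
    rw [Filter.EventuallyEq.deriv_eq hEq]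
    have hnum : HasDerivAt (fun x => Real.exp ((θ₁+θ₂)*x) * Wf θ₁ θ₂ k q x)
        ((θ₁+θ₂)*Real.exp ((θ₁+θ₂)*z) * Wf θ₁ θ₂ k q z
          + Real.exp ((θ₁+θ₂)*z) * W1f θ₁ θ₂ k q z) z :=
      (expD (θ₁+θ₂) z).mul (Wf_deriv θ₁ θ₂ k q z)
    have hden := (hDder z).pow 2
    have hdz := hnum.div hden (pow_ne_zero 2 (hDpos z hz0).ne')
    rw [HasDerivAt.deriv (f := fun x => Real.exp ((θ₁+θ₂)*x) * Wf θ₁ θ₂ k q x / (Real.exp (θ₁*x) - Real.exp (θ₂*x))^2) hdz, hWz]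
    have hD := hDpos z hz0
    have hE := Real.exp_pos ((θ₁+θ₂)*z)
    simp only [mul_zero, zero_mul, add_zero, zero_add, sub_zero, pow_one]
    exact div_pos (mul_pos (mul_pos hE hW1z) (pow_pos hD 2)) (pow_pos (pow_pos hD 2) 2)
  · intro z' hz' hdz'
    rw [(hderiv z' hz').deriv] at hdz'
    have hD := (hDpos z' hz').ne'
    have hW0 : Wf θ₁ θ₂ k q z' = 0 := by
      rcases div_eq_zero_iff.1 hdz' with h | h
      · rcases mul_eq_zero.1 h with h' | h'
        · exact absurd h' (Real.exp_ne_zero _)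
        · exact h'
      · exact absurd h (pow_ne_zero 2 hD)
    exact hWuniq z' hz' hW0
end

section
/- Let μ, σ, q > 0 and 0 < c ≤ c̄ ≤ qσ²/(2μ), and let θ₂(c̄) < 0 be the negative root of (σ²/2)z² + (μ−c̄)z − q = 0. Set W(x) = (c̄/q)(1 − e^{θ₂(c̄)x}). Then for all x ≥ 0, (σ²/2)W''(x) + (μ−c)W'(x) − qW(x) + c ≤ 0; equivalently (c̄−c)(−(c̄/q)θ₂(c̄)e^{θ₂(c̄)x} − 1) ≤ 0. -/
theorem stmt_18 (μ σ q c cb θ₂ : ℝ)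
    (hμ : 0 < μ) (hσ : 0 < σ) (hq : 0 < q)
    (hc : 0 < c) (hccb : c ≤ cb) (hcb : cb ≤ q * σ^2 / (2*μ))
    (hθ₂neg : θ₂ < 0)
    (hθ₂root : (σ^2/2) * θ₂^2 + (μ - cb) * θ₂ - q = 0)
    (W : ℝ → ℝ)
    (hW : ∀ x, W x = (cb/q) * (1 - Real.exp (θ₂ * x))) :
    ∀ x : ℝ, 0 ≤ x →
      (σ^2/2) * deriv (deriv W) x + (μ - c) * deriv W x - q * W x + c ≤ 0 ∧
      (cb - c) * (-(cb/q) * θ₂ * Real.exp (θ₂ * x) - 1) ≤ 0 := by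
  have hWf : W = fun x => (cb/q) * (1 - Real.exp (θ₂ * x)) := funext hW
  have hd : ∀ x, HasDerivAt W (-(cb/q) * θ₂ * Real.exp (θ₂ * x)) x := by
    intro x
    rw [hWf]
    have h1 : HasDerivAt (fun x : ℝ => θ₂ * x) θ₂ x := by
      simpa using (hasDerivAt_id x).const_mul θ₂
    have h2 := (Real.hasDerivAt_exp (θ₂ * x)).comp x h1
    have h3 := ((hasDerivAt_const x (1:ℝ)).sub h2).const_mul (cb/q)
    refine h3.congr_deriv ?_
    ring
  have hdW : deriv W = fun x => -(cb/q) * θ₂ * Real.exp (θ₂ * x) :=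
    funext fun x => (hd x).deriv
  have hdd : ∀ x, HasDerivAt (deriv W) (-(cb/q) * θ₂^2 * Real.exp (θ₂ * x)) x := by
    intro x
    rw [hdW]
    have h1 : HasDerivAt (fun x : ℝ => θ₂ * x) θ₂ x := by
      simpa using (hasDerivAt_id x).const_mul θ₂
    have h2 := (Real.hasDerivAt_exp (θ₂ * x)).comp x h1
    have h3 := h2.const_mul (-(cb/q) * θ₂)
    refine h3.congr_deriv ?_
    ring
  intro x hx
  have hE : Real.exp (θ₂ * x) ≤ 1 :=
    Real.exp_le_one_iff.2 (mul_nonpos_of_nonpos_of_nonneg hθ₂neg.le hx)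
  have hEpos : 0 < Real.exp (θ₂ * x) := Real.exp_pos _
  set E := Real.exp (θ₂ * x) with hEdef
  -- key inequality: cb * (-θ₂) ≤ q
  have hcbpos : 0 < cb := lt_of_lt_of_le hc hccb
  have ht : 0 < -θ₂ := neg_pos.2 hθ₂neg
  have hkey : cb * (-θ₂) ≤ q := by
    have h2 : cb * (2 * μ) ≤ q * σ^2 := (le_div_iff₀ (by positivity)).1 hcb
    have hst : 2 * μ ≤ σ^2 * (-θ₂) := by
      by_contra hcon
      push_neg at hcon
      nlinarith [mul_pos (by positivity : (0:ℝ) < σ^2 * (-θ₂)/2 + cb) (by linarith : (0:ℝ) < 2*μ - σ^2*(-θ₂))]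
    nlinarith [mul_nonneg ht.le (by linarith : (0:ℝ) ≤ σ^2 * (-θ₂) - 2*μ)]
  have hsecond : (cb - c) * (-(cb/q) * θ₂ * E - 1) ≤ 0 := by
    apply mul_nonpos_of_nonneg_of_nonpos (by linarith)
    have : -(cb/q) * θ₂ * E ≤ 1 := by
      have h1 : cb * (-θ₂) * E ≤ q := by
        calc cb * (-θ₂) * E ≤ cb * (-θ₂) * 1 := by
              apply mul_le_mul_of_nonneg_left hE
              exact mul_nonneg hcbpos.le (neg_nonneg.2 hθ₂neg.le)
          _ = cb * (-θ₂) := by ring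
          _ ≤ q := hkey
      rw [show -(cb/q) * θ₂ * E = (cb * -θ₂ * E) / q by ring, div_le_one hq]
      exact h1
    linarith
  refine ⟨?_, hsecond⟩
  rw [(hdd x).deriv, hdW, hW]
  have heq : (σ^2/2) * (-(cb/q) * θ₂^2 * E) + (μ - c) * (-(cb/q) * θ₂ * E)
      - q * ((cb/q) * (1 - E)) + c = (cb - c) * (-(cb/q) * θ₂ * E - 1) := by
    have hqq : cb / q * q = cb := div_mul_cancel₀ cb hq.ne'
    linear_combination (-(cb/q) * E) * hθ₂root - hqq
  rw [heq]
  exact hsecond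
end

section
/- Let q > 0. Then for c̄ ≤ qσ²/(2μ) with μ, σ > 0 and θ₂(c̄) the negative root of (σ²/2)z² + (μ−c̄)z − q = 0, one has −(c̄/q)θ₂(c̄) ≤ 1. -/
theorem stmt_19 (μ σ q cb θ₂ : ℝ)
    (hμ : 0 < μ) (hσ : 0 < σ) (hq : 0 < q)
    (hcb : cb ≤ q * σ^2 / (2 * μ))
    (hθ₂ : θ₂ = (cb - μ - Real.sqrt ((cb - μ)^2 + 2*q*σ^2)) / σ^2) :
    -(cb/q) * θ₂ ≤ 1 := by
  subst hθ₂
  have hD : (0:ℝ) ≤ (cb - μ)^2 + 2*q*σ^2 := by positivity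
  set s := Real.sqrt ((cb - μ)^2 + 2*q*σ^2) with hsdef
  have hs0 : 0 ≤ s := Real.sqrt_nonneg _
  have hs2 : s^2 = (cb - μ)^2 + 2*q*σ^2 := Real.sq_sqrt hD
  have hcb2 : 2 * μ * cb ≤ q * σ^2 := by
    rw [le_div_iff₀ (by positivity)] at hcb; nlinarith
  have h1 : -(cb/q) * ((cb - μ - s)/σ^2) = cb*(s - (cb - μ)) / (q*σ^2) := by
    field_simp; ring
  rw [h1, div_le_one (by positivity)]
  rcases le_or_gt cb 0 with h | h
  · have hge : cb - μ ≤ s := by nlinarith [sq_nonneg (s - (cb - μ)), sq_nonneg (s + (cb - μ))]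
    nlinarith
  · have hA : 0 < q*σ^2 + cb*(cb - μ) := by nlinarith
    have hsq : (cb*s)^2 ≤ (q*σ^2 + cb*(cb - μ))^2 := by nlinarith [mul_pos hq (pow_pos hσ 2)]
    nlinarith [mul_nonneg h.le hs0]
end
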